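/- arXiv:2102.04542 — 6 statements merged into one kernel-verified Lean document; each statement's English description precedes it below -/
import Mathlib

section
/- Let W : ℕ → ℝ be nonnegative, nondecreasing, concave with W(0) = 0, and with curvature at most c ∈ (0,1], i.e., W(n) - W(n-1) ≥ (1-c)·W(1). Define η_1 = (2W(1) - W(2))/c, η_k = (2W(k) - W(k-1) - W(k+1))/c for k = 2,...,n-1, and η_n = W(1) - Σ_{k=1}^{n-1} η_k. Then all coefficients η_1, ..., η_n are nonnegative. -/
/-!
With `d j = W j - W (j - 1)` the marginal gain, `c η_j = d j - d (j + 1)` for `j < n`, which is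
nonnegative by concavity. These coefficients telescope, so `c (η_1 + ⋯ + η_{n-1}) = W 1 - d n`,
and `η_n ≥ 0` is then exactly the curvature bound `d n ≥ (1 - c) W 1`.
-/

open Finset

theorem Finset.sum_Icc_one_sub_succ {M : Type*} [AddCommGroup M] (f : ℕ → M) {n : ℕ}
    (hn : 1 ≤ n) : ∑ k ∈ Icc 1 (n - 1), (f k - f (k + 1)) = f 1 - f n := by
  rw [← Ico_add_one_right_eq_Icc, Nat.sub_add_cancel hn, ← neg_sub (f n), ← sum_Ico_sub f hn,
    ← sum_neg_distrib]
  simp only [neg_sub]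

theorem coefficients_nonneg_general
    (W : ℕ → ℝ) (c : ℝ) (n : ℕ)
    (hc0 : 0 < c)
    (h0 : W 0 = 0)
    (hconc : ∀ x : ℕ, 1 ≤ x → W (x + 1) - W x ≤ W x - W (x - 1))
    (hcurv : W n - W (n - 1) ≥ (1 - c) * W 1)
    (η : ℕ → ℝ)
    (hη1 : η 1 = (2 * W 1 - W 2) / c)
    (hηk : ∀ k : ℕ, 2 ≤ k → k ≤ n - 1 → η k = (2 * W k - W (k - 1) - W (k + 1)) / c)
    (hηn : η n = W 1 - ∑ k ∈ Finset.Icc 1 (n - 1), η k) :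
    ∀ k ∈ Finset.Icc 1 n, 0 ≤ η k := by
  intro k hk
  obtain ⟨hk1, hkn⟩ := mem_Icc.mp hk
  set d : ℕ → ℝ := fun j => W j - W (j - 1) with hd
  have hηd : ∀ j ∈ Icc 1 (n - 1), η j = (d j - d (j + 1)) / c := by
    intro j hj
    obtain ⟨hj1, hjn⟩ := mem_Icc.mp hj
    rcases hj1.eq_or_lt with rfl | hj2
    · rw [hη1]
      simp only [hd, h0]
      ring
    · rw [hηk j hj2 hjn]
      simp only [hd, add_tsub_cancel_right]
      ring
  rcases hkn.lt_or_eq with hlt | rfl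
  · rw [hηd k (mem_Icc.mpr ⟨hk1, by omega⟩)]
    exact div_nonneg (sub_nonneg.mpr (by simpa only [hd, add_tsub_cancel_right] using hconc k hk1))
      hc0.le
  · have hsum : ∑ j ∈ Icc 1 (k - 1), η j = (W 1 - d k) / c := by
      rw [sum_congr rfl hηd, ← sum_div, sum_Icc_one_sub_succ d hk1]
      simp only [hd, h0, tsub_self, sub_zero]
    rw [hηn, hsum, sub_nonneg, div_le_iff₀ hc0]
    linarith

theorem coefficients_nonneg
    (W : ℕ → ℝ) (c : ℝ) (n : ℕ)
    (hc0 : 0 < c) (hc1 : c ≤ 1) (hn : 2 ≤ n)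
    (h0 : W 0 = 0)
    (hmono : ∀ x : ℕ, W x ≤ W (x + 1))
    (hconc : ∀ x : ℕ, 1 ≤ x → W (x + 1) - W x ≤ W x - W (x - 1))
    (hpos : ∀ x : ℕ, 1 ≤ x → 0 < W x)
    (hcurv : W n - W (n - 1) ≥ (1 - c) * W 1)
    (η : ℕ → ℝ)
    (hη1 : η 1 = (2 * W 1 - W 2) / c)
    (hηk : ∀ k : ℕ, 2 ≤ k → k ≤ n - 1 → η k = (2 * W k - W (k - 1) - W (k + 1)) / c)
    (hηn : η n = W 1 - ∑ k ∈ Finset.Icc 1 (n - 1), η k) :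
    ∀ k ∈ Finset.Icc 1 n, 0 ≤ η k :=
  coefficients_nonneg_general W c n hc0 h0 hconc hcurv η hη1 hηk hηn
end

section
/- Let W : ℕ → ℝ be nonnegative, nondecreasing, concave with W(0) = 0 and curvature at most c ∈ (0,1] (i.e., W(n) - W(n-1) ≥ (1-c)W(1)). With η_1 = (2W(1)-W(2))/c, η_k = (2W(k)-W(k-1)-W(k+1))/c for 2 ≤ k ≤ n-1, and η_n = W(1) - Σ_{k<n} η_k, we have W(x) = Σ_{k=1}^{n} η_k · V^c_k(x) for all x = 0, 1, ..., n, where V^c_k(x) = (1-c)x + c·min(x,k). -/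
/-!
For `k < n`, `c η_k` is minus the second difference of `W` (using `W 0 = 0` at `k = 1`), so
telescoping gives `c ∑_{k ≤ m} η_k = W 1 - (W (m + 1) - W m)`; since `η_n` is chosen to make
`∑_{k ≤ n} η_k = W 1`, the tails satisfy
`c ∑_{x < k ≤ n} η_k = (W (x + 1) - W x) - (1 - c) W 1`.
Passing from `x` to `x + 1` increases `∑ η_k V_k(x)` by `(1 - c) ∑ η_k + c ∑_{x < k} η_k`,
which is therefore exactly `W (x + 1) - W x`, and both sides vanish at `x = 0`.
-/

open Finset

/-- The `(c, k)`-coverage function `V^c_k`. -/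
def coverage (c : ℝ) (k x : ℕ) : ℝ := (1 - c) * x + c * (min x k : ℕ)

lemma coverage_succ (c : ℝ) (k x : ℕ) :
    coverage c k (x + 1) = coverage c k x + (1 - c) + if x < k then c else 0 := by
  unfold coverage
  split_ifs with h
  · rw [Nat.min_eq_left h, Nat.min_eq_left h.le]
    push_cast
    ring
  · rw [Nat.min_eq_right (by omega), Nat.min_eq_right (by omega)]
    push_cast
    ring

lemma sum_mul_coverage_succ (η : ℕ → ℝ) (c : ℝ) (n x : ℕ) :
    ∑ k ∈ Icc 1 n, η k * coverage c k (x + 1) =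
      ∑ k ∈ Icc 1 n, η k * coverage c k x + (1 - c) * ∑ k ∈ Icc 1 n, η k
        + c * ∑ k ∈ Ioc x n, η k := by
  have hfilter : {k ∈ Icc 1 n | x < k} = Ioc x n := by
    ext k
    simp only [mem_filter, mem_Icc, mem_Ioc]
    omega
  simp only [coverage_succ, mul_add, sum_add_distrib, mul_ite, mul_zero, ← sum_filter, hfilter,
    ← sum_mul]
  ring

lemma eq_sum_mul_coverage_of_sub_eq {W η : ℕ → ℝ} {c : ℝ} {n : ℕ} (h0 : W 0 = 0)
    (hinc : ∀ x < n,
      W (x + 1) - W x = (1 - c) * ∑ k ∈ Icc 1 n, η k + c * ∑ k ∈ Ioc x n, η k) :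
    ∀ x ≤ n, W x = ∑ k ∈ Icc 1 n, η k * coverage c k x := by
  intro x hx
  induction x with
  | zero => simp [coverage, h0]
  | succ x ih =>
    rw [sum_mul_coverage_succ, ← ih (by omega)]
    linarith [hinc x hx]

section Telescoping

variable {W η : ℕ → ℝ} {c : ℝ} {n : ℕ}

lemma mul_sum_Icc_one_eq_of_mul_eq_sub (h0 : W 0 = 0)
    (hstep : ∀ k, k + 1 < n → c * η (k + 1) = (W (k + 1) - W k) - (W (k + 2) - W (k + 1)))
    {m : ℕ} (hm : m < n) : c * ∑ k ∈ Icc 1 m, η k = W 1 - (W (m + 1) - W m) := by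
  induction m with
  | zero => simp [h0]
  | succ m ih =>
    rw [sum_Icc_succ_top (by omega), mul_add, ih (by omega), hstep m hm]
    ring

lemma mul_sum_Ioc_eq_of_mul_eq_sub (h0 : W 0 = 0)
    (hstep : ∀ k, k + 1 < n → c * η (k + 1) = (W (k + 1) - W k) - (W (k + 2) - W (k + 1)))
    (hsum : ∑ k ∈ Icc 1 n, η k = W 1) {x : ℕ} (hx : x < n) :
    c * ∑ k ∈ Ioc x n, η k = (W (x + 1) - W x) - (1 - c) * W 1 := by
  have hsplit := sum_Ioc_consecutive η (Nat.zero_le x) hx.le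
  rw [← Icc_add_one_left_eq_Ioc 0 x, ← Icc_add_one_left_eq_Ioc 0 n, zero_add, hsum] at hsplit
  have hhead := mul_sum_Icc_one_eq_of_mul_eq_sub h0 hstep hx
  linear_combination c * hsplit - hhead

end Telescoping

theorem concave_decomposition_coverage_general
    (W : ℕ → ℝ) (c : ℝ) (n : ℕ)
    (hc0 : 0 < c)
    (h0 : W 0 = 0)
    (η : ℕ → ℝ)
    (hη1 : η 1 = (2 * W 1 - W 2) / c)
    (hηk : ∀ k : ℕ, 2 ≤ k → k ≤ n - 1 → η k = (2 * W k - W (k - 1) - W (k + 1)) / c)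
    (hηn : η n = W 1 - ∑ k ∈ Finset.Icc 1 (n - 1), η k) :
    ∀ x : ℕ, x ≤ n →
      W x = ∑ k ∈ Finset.Icc 1 n, η k * ((1 - c) * x + c * min x k) := by
  have hstep : ∀ k, k + 1 < n →
      c * η (k + 1) = (W (k + 1) - W k) - (W (k + 2) - W (k + 1)) := by
    intro k hk
    rcases k with _ | k
    · rw [hη1, mul_div_cancel₀ _ hc0.ne', h0]
      ring
    · rw [hηk (k + 2) (by omega) (by omega), mul_div_cancel₀ _ hc0.ne',
        show k + 2 - 1 = k + 1 by omega]
      ring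
  have hsum : 1 ≤ n → ∑ k ∈ Icc 1 n, η k = W 1 := by
    intro hn
    obtain ⟨m, rfl⟩ := Nat.exists_eq_add_of_le' hn
    rw [sum_Icc_succ_top (by omega), hηn, Nat.add_sub_cancel]
    ring
  refine eq_sum_mul_coverage_of_sub_eq h0 fun x hx => ?_
  rw [mul_sum_Ioc_eq_of_mul_eq_sub h0 hstep (hsum (by omega)) hx, hsum (by omega)]
  ring

theorem concave_decomposition_coverage
    (W : ℕ → ℝ) (c : ℝ) (n : ℕ)
    (hc0 : 0 < c) (hc1 : c ≤ 1) (hn : 2 ≤ n)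
    (h0 : W 0 = 0)
    (hmono : ∀ x : ℕ, W x ≤ W (x + 1))
    (hconc : ∀ x : ℕ, 1 ≤ x → W (x + 1) - W x ≤ W x - W (x - 1))
    (hpos : ∀ x : ℕ, 1 ≤ x → 0 < W x)
    (hcurv : W n - W (n - 1) ≥ (1 - c) * W 1)
    (η : ℕ → ℝ)
    (hη1 : η 1 = (2 * W 1 - W 2) / c)
    (hηk : ∀ k : ℕ, 2 ≤ k → k ≤ n - 1 → η k = (2 * W k - W (k - 1) - W (k + 1)) / c)
    (hηn : η n = W 1 - ∑ k ∈ Finset.Icc 1 (n - 1), η k) :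
    ∀ x : ℕ, x ≤ n →
      W x = ∑ k ∈ Finset.Icc 1 n, η k * ((1 - c) * x + c * min x k) :=
  concave_decomposition_coverage_general W c n hc0 h0 η hη1 hηk hηn
end

section
/- For β a positive integer and α ∈ [0,1], as x̂ → ∞, (1 + Σ_{j=1}^{x̂-1} β^j/j! + α·β^{x̂}/x̂!) / (Σ_{j=0}^{β-1} β^j/j! + Σ_{j=β+1}^{x̂-1} (β^j/j!)·(αβ+(1-α)j)/β) → e^β / (e^β - α β^β/β!). -/
open Filter

theorem poa_ratio_limit
    (β : ℕ) (hβ : 1 ≤ β) (α : ℝ) (hα0 : 0 ≤ α) (hα1 : α ≤ 1) :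
    Tendsto
      (fun m : ℕ =>
        (1 + (∑ j ∈ Finset.Icc 1 (m - 1), (β : ℝ) ^ j / (Nat.factorial j))
           + α * (β : ℝ) ^ m / (Nat.factorial m)) /
        ((∑ j ∈ Finset.range β, (β : ℝ) ^ j / (Nat.factorial j))
           + ∑ j ∈ Finset.Icc (β + 1) (m - 1),
               ((β : ℝ) ^ j / (Nat.factorial j)) * (α * β + (1 - α) * j) / β))
      atTop
      (nhds (Real.exp β / (Real.exp β - α * (β : ℝ) ^ β / (Nat.factorial β)))) := by
  have hβ0 : (β : ℝ) ≠ 0 := by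
    have : (0:ℝ) < β := by exact_mod_cast hβ
    linarith
  set f : ℕ → ℝ := fun j => (β : ℝ) ^ j / (Nat.factorial j) with hf
  set P : ℕ → ℝ := fun m => ∑ j ∈ Finset.range m, f j with hPdef
  have hexp : HasSum f (Real.exp β) := by
    rw [Real.exp_eq_exp_ℝ]
    exact NormedSpace.expSeries_div_hasSum_exp (β : ℝ)
  have hsum : Summable f := hexp.summable
  have hP : Tendsto P atTop (nhds (Real.exp β)) := hexp.tendsto_sum_nat
  have hP' : Tendsto (fun m => P (m - 1)) atTop (nhds (Real.exp β)) :=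
    hP.comp (tendsto_sub_atTop_nat 1)
  have hf0 : Tendsto f atTop (nhds 0) := hsum.tendsto_atTop_zero
  -- numerator limit
  have hN : Tendsto (fun m => P m + α * f m) atTop (nhds (Real.exp β)) := by
    have := hP.add (hf0.const_mul α)
    simpa using this
  -- denominator limit
  have hD : Tendsto (fun m => P β + α * (P m - P (β + 1)) + (1 - α) * (P (m - 1) - P β))
      atTop (nhds (Real.exp β - α * f β)) := by
    have h1 : Tendsto (fun m : ℕ => P β + α * (P m - P (β + 1)) + (1 - α) * (P (m - 1) - P β))
        atTop (nhds (P β + α * (Real.exp β - P (β + 1)) + (1 - α) * (Real.exp β - P β))) := by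
      exact (tendsto_const_nhds.add ((hP.sub tendsto_const_nhds).const_mul α)).add
        ((hP'.sub tendsto_const_nhds).const_mul (1 - α))
    have hPs : P (β + 1) = P β + f β := Finset.sum_range_succ f β
    have : P β + α * (Real.exp β - P (β + 1)) + (1 - α) * (Real.exp β - P β)
        = Real.exp β - α * f β := by rw [hPs]; ring
    rwa [this] at h1
  -- denominator limit is nonzero
  have hfβnonneg : 0 ≤ f β := by positivity
  have hfβlt : f β + 1 ≤ Real.exp β := by
    have h1 : P (β + 1) ≤ Real.exp β :=
      sum_le_hasSum (Finset.range (β + 1)) (fun i _ => by positivity) hexp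
    have h2 : f 0 + f β ≤ P (β + 1) := by
      simp only [hPdef]
      rw [Finset.sum_range_succ]
      have : f 0 ≤ ∑ j ∈ Finset.range β, f j := by
        refine Finset.single_le_sum (f := f) (fun i _ => by positivity) ?_
        exact Finset.mem_range.mpr hβ
      linarith
    have hf00 : f 0 = 1 := by simp [hf]
    rw [hf00] at h2
    linarith
  have hne : Real.exp β - α * f β ≠ 0 := by
    have : α * f β ≤ f β := by nlinarith
    have : 0 < Real.exp β - α * f β := by linarith
    linarith
  have hT := hN.div hD hne
  -- key identity for the denominator sum
  have hg : ∀ k : ℕ, f (k + 1) * (α * β + (1 - α) * (k + 1 : ℕ)) / β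
      = α * f (k + 1) + (1 - α) * f k := by
    intro k
    have hk : ((Nat.factorial k : ℝ)) ≠ 0 := by positivity
    simp only [hf]
    rw [pow_succ, Nat.factorial_succ]
    push_cast
    have hk1 : ((k : ℝ) + 1) ≠ 0 := by positivity
    field_simp
  have key : ∀ n : ℕ, ∑ j ∈ Finset.Icc (β + 1) (β + 1 + n),
      f j * (α * β + (1 - α) * j) / β
      = α * (P (β + 2 + n) - P (β + 1)) + (1 - α) * (P (β + 1 + n) - P β) := by
    intro n
    induction n with
    | zero =>
      simp only [Nat.add_zero, Finset.Icc_self, Finset.sum_singleton]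
      have h1 : P (β + 2) = P (β + 1) + f (β + 1) := Finset.sum_range_succ f (β + 1)
      have h2 : P (β + 1) = P β + f β := Finset.sum_range_succ f β
      have := hg β
      push_cast at this ⊢
      rw [this, h1, h2]
      ring
    | succ n ih =>
      have hset : Finset.Icc (β + 1) (β + 1 + (n + 1))
          = insert (β + 2 + n) (Finset.Icc (β + 1) (β + 1 + n)) := by
        ext x
        simp only [Finset.mem_Icc, Finset.mem_insert]
        omega
      have hnotmem : (β + 2 + n) ∉ Finset.Icc (β + 1) (β + 1 + n) := by
        simp only [Finset.mem_Icc]; omega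
      rw [hset, Finset.sum_insert hnotmem, ih]
      have hgn := hg (β + 1 + n)
      have he1 : β + 1 + n + 1 = β + 2 + n := by omega
      rw [he1] at hgn
      rw [hgn]
      have h1 : P (β + 2 + (n + 1)) = P (β + 2 + n) + f (β + 2 + n) := by
        have : β + 2 + (n + 1) = (β + 2 + n) + 1 := by omega
        rw [this]; exact Finset.sum_range_succ f (β + 2 + n)
      have h2 : P (β + 1 + (n + 1)) = P (β + 1 + n) + f (β + 1 + n) := by
        have : β + 1 + (n + 1) = (β + 1 + n) + 1 := by omega
        rw [this]; exact Finset.sum_range_succ f (β + 1 + n)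
      rw [h1, h2]
      ring
  -- transfer
  have hval : α * (β : ℝ) ^ β / (Nat.factorial β) = α * f β := by
    simp only [hf]; rw [mul_div_assoc]
  rw [hval]
  refine Tendsto.congr' ?_ hT
  filter_upwards [eventually_ge_atTop (β + 2)] with m hm
  obtain ⟨n, rfl⟩ : ∃ n, m = β + 2 + n := ⟨m - β - 2, by omega⟩
  have hm1 : β + 2 + n - 1 = β + 1 + n := by omega
  have hnum : P (β + 2 + n) = 1 + ∑ j ∈ Finset.Icc 1 (β + 1 + n), f j := by
    have hins : Finset.range (β + 2 + n) = insert 0 (Finset.Icc 1 (β + 1 + n)) := by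
      ext x; simp only [Finset.mem_range, Finset.mem_insert, Finset.mem_Icc]; omega
    simp only [hPdef]
    rw [hins, Finset.sum_insert (by simp)]
    simp [hf]
  have hα : α * f (β + 2 + n) = α * (β : ℝ) ^ (β + 2 + n) / (Nat.factorial (β + 2 + n)) := by
    simp only [hf]; rw [mul_div_assoc]
  simp only [Pi.div_apply]
  rw [hm1, key n, hα, hnum]
  simp only [hPdef]
  ring
end

section
/- Define the coefficients η_1 = (W^{ub}(2)-W^{ub}(1)-W(2)+W(1))/(W^{ub}(2)-W^{ub}(1)-W^{lb}(2)+W^{lb}(1)), η_j = (W^{ub}(j+1)-W^{ub}(j)-W(j+1)+W(j))/(W^{ub}(j+1)-W^{ub}(j)-W^{lb}(j+1)+W^{lb}(j)) - Σ_{k<j} η_k for 2 ≤ j ≤ n-1, and η_n = 1 - Σ_{k<n} η_k. Under the sandwich conditions (i) and (ii) of Corollary 3 (with W(1)=1 normalization), each η_j ≥ 0. -/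
/-!
With `A j = (Wub (j+1) - Wub j) - (W (j+1) - W j)` and `B j = (Wub (j+1) - Wub j) - (Wlb (j+1) - Wlb j)`,
the recursion makes the partial sums `η 1 + ⋯ + η j` equal to `r j = A j / B j` for `j ≤ n - 1`, so
`η j = r j - r (j-1)` and `η n = 1 - r (n-1)`. Condition (i) gives `0 ≤ A j ≤ B j`, hence `0 ≤ r j ≤ 1`,
and condition (ii) says that `A` increases while `B` decreases, hence `r` is monotone.
-/

open Finset

section PartialSums

variable {G : Type*} [AddCommGroup G] {η r : ℕ → G} {m : ℕ}

theorem sum_Icc_one_eq_of_eq_sub_sum (h1 : η 1 = r 1)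
    (hstep : ∀ j, 2 ≤ j → j ≤ m → η j = r j - ∑ k ∈ Icc 1 (j - 1), η k)
    {j : ℕ} (hj1 : 1 ≤ j) (hjm : j ≤ m) :
    ∑ k ∈ Icc 1 j, η k = r j := by
  obtain rfl | ⟨i, hi, rfl⟩ : j = 1 ∨ ∃ i, 1 ≤ i ∧ j = i + 1 :=
    (eq_or_lt_of_le hj1).imp Eq.symm fun h => ⟨j - 1, by omega, by omega⟩
  · rw [Icc_self, sum_singleton, h1]
  · rw [sum_Icc_succ_top (by omega), hstep (i + 1) (by omega) hjm, Nat.add_sub_cancel,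
      add_sub_cancel]

theorem nonneg_of_eq_sub_sum [PartialOrder G] [IsOrderedAddMonoid G] (h1 : η 1 = r 1)
    (hstep : ∀ j, 2 ≤ j → j ≤ m → η j = r j - ∑ k ∈ Icc 1 (j - 1), η k)
    (hr1 : 0 ≤ r 1) (hmono : ∀ j, 1 ≤ j → j < m → r j ≤ r (j + 1)) :
    ∀ j ∈ Icc 1 m, 0 ≤ η j := by
  intro j hj
  rw [mem_Icc] at hj
  obtain rfl | ⟨i, hi, rfl⟩ : j = 1 ∨ ∃ i, 1 ≤ i ∧ j = i + 1 :=
    (eq_or_lt_of_le hj.1).imp Eq.symm fun h => ⟨j - 1, by omega, by omega⟩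
  · exact h1 ▸ hr1
  · rw [hstep (i + 1) (by omega) hj.2, Nat.add_sub_cancel,
      sum_Icc_one_eq_of_eq_sub_sum h1 hstep hi (by omega), sub_nonneg]
    exact hmono i hi (by omega)

end PartialSums

section SlackRatio

noncomputable def slackRatio (W Wub Wlb : ℕ → ℝ) (j : ℕ) : ℝ :=
  (Wub (j + 1) - Wub j - W (j + 1) + W j) / (Wub (j + 1) - Wub j - Wlb (j + 1) + Wlb j)

variable {W Wub Wlb : ℕ → ℝ} {j : ℕ}

theorem slackRatio_nonneg (hlb : Wlb (j + 1) - Wlb j ≤ W (j + 1) - W j)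
    (hub : W (j + 1) - W j ≤ Wub (j + 1) - Wub j) :
    0 ≤ slackRatio W Wub Wlb j :=
  div_nonneg (by linarith) (by linarith)

theorem slackRatio_le_one (hlb : Wlb (j + 1) - Wlb j ≤ W (j + 1) - W j)
    (hub : W (j + 1) - W j ≤ Wub (j + 1) - Wub j) :
    slackRatio W Wub Wlb j ≤ 1 :=
  div_le_one_of_le₀ (by linarith) (by linarith)

theorem slackRatio_le_slackRatio_succ (hub : W (j + 1) - W j ≤ Wub (j + 1) - Wub j)
    (hW : W (j + 2) - 2 * W (j + 1) + W j ≤ Wub (j + 2) - 2 * Wub (j + 1) + Wub j)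
    (hWlb : Wub (j + 2) - 2 * Wub (j + 1) + Wub j ≤ Wlb (j + 2) - 2 * Wlb (j + 1) + Wlb j)
    (hden : 0 < Wub (j + 2) - Wub (j + 1) - Wlb (j + 2) + Wlb (j + 1)) :
    slackRatio W Wub Wlb j ≤ slackRatio W Wub Wlb (j + 1) :=
  div_le_div₀ (by linarith) (by linarith) hden (by linarith)

end SlackRatio

theorem generalized_coefficients_nonneg_general
    (n : ℕ) (hn : 2 ≤ n)
    (W Wub Wlb : ℕ → ℝ)
    (hi : ∀ x, 1 ≤ x → x ≤ n - 1 →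
      Wlb (x + 1) - Wlb x ≤ W (x + 1) - W x ∧
      W (x + 1) - W x ≤ Wub (x + 1) - Wub x)
    (hii : ∀ x, 2 ≤ x → x ≤ n - 1 →
      W (x + 1) - 2 * W x + W (x - 1) ≤
        Wub (x + 1) - 2 * Wub x + Wub (x - 1) ∧
      Wub (x + 1) - 2 * Wub x + Wub (x - 1) ≤
        Wlb (x + 1) - 2 * Wlb x + Wlb (x - 1))
    (hden : ∀ j, 1 ≤ j → j ≤ n - 1 →
      0 < Wub (j + 1) - Wub j - Wlb (j + 1) + Wlb j)
    (η : ℕ → ℝ)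
    (hη1 : η 1 = (Wub 2 - Wub 1 - W 2 + W 1) / (Wub 2 - Wub 1 - Wlb 2 + Wlb 1))
    (hηj : ∀ j, 2 ≤ j → j ≤ n - 1 →
      η j = (Wub (j + 1) - Wub j - W (j + 1) + W j) /
              (Wub (j + 1) - Wub j - Wlb (j + 1) + Wlb j)
            - ∑ k ∈ Finset.Icc 1 (j - 1), η k)
    (hηn : η n = 1 - ∑ k ∈ Finset.Icc 1 (n - 1), η k) :
    ∀ j ∈ Finset.Icc 1 n, 0 ≤ η j := by
  -- `η n` obeys the same recursion as the other coefficients once the ratio is set to `1` at `n`.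
  set r := Function.update (slackRatio W Wub Wlb) n 1
  have hr : ∀ j, j < n → r j = slackRatio W Wub Wlb j := fun j hj =>
    Function.update_of_ne hj.ne _ _
  have hr1 : r 1 = slackRatio W Wub Wlb 1 := hr 1 (by omega)
  have hrn : r n = 1 := Function.update_self _ _ _
  refine nonneg_of_eq_sub_sum (hη1.trans hr1.symm) (fun j hj2 hjn => ?_) ?_ (fun j hj1 hjn => ?_)
  · rcases hjn.eq_or_lt with rfl | hjn
    · rw [hrn]
      exact hηn
    · rw [hr j hjn]
      exact hηj j hj2 (by omega)
  · rw [hr1]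
    exact slackRatio_nonneg (hi 1 le_rfl (by omega)).1 (hi 1 le_rfl (by omega)).2
  · obtain ⟨hlb, hub⟩ := hi j hj1 (by omega)
    rw [hr j hjn]
    rcases (show j + 1 ≤ n by omega).eq_or_lt with hjn' | hjn'
    · rw [hjn', hrn]
      exact slackRatio_le_one hlb hub
    · obtain ⟨hW, hWlb⟩ := hii (j + 1) (by omega) (by omega)
      rw [hr (j + 1) hjn']
      exact slackRatio_le_slackRatio_succ hub hW hWlb (hden (j + 1) (by omega) (by omega))

theorem generalized_coefficients_nonneg
    (n : ℕ) (hn : 2 ≤ n)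
    (W Wub Wlb : ℕ → ℝ)
    (hnorm1 : W 1 = Wub 1) (hnorm2 : W 1 = Wlb 1) (hW1 : W 1 = 1)
    (hi : ∀ x, 1 ≤ x → x ≤ n - 1 →
      Wlb (x + 1) - Wlb x ≤ W (x + 1) - W x ∧
      W (x + 1) - W x ≤ Wub (x + 1) - Wub x)
    (hii : ∀ x, 2 ≤ x → x ≤ n - 1 →
      W (x + 1) - 2 * W x + W (x - 1) ≤
        Wub (x + 1) - 2 * Wub x + Wub (x - 1) ∧
      Wub (x + 1) - 2 * Wub x + Wub (x - 1) ≤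
        Wlb (x + 1) - 2 * Wlb x + Wlb (x - 1))
    (hden : ∀ j, 1 ≤ j → j ≤ n - 1 →
      0 < Wub (j + 1) - Wub j - Wlb (j + 1) + Wlb j)
    (η : ℕ → ℝ)
    (hη1 : η 1 = (Wub 2 - Wub 1 - W 2 + W 1) / (Wub 2 - Wub 1 - Wlb 2 + Wlb 1))
    (hηj : ∀ j, 2 ≤ j → j ≤ n - 1 →
      η j = (Wub (j + 1) - Wub j - W (j + 1) + W j) /
              (Wub (j + 1) - Wub j - Wlb (j + 1) + Wlb j)
            - ∑ k ∈ Finset.Icc 1 (j - 1), η k)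
    (hηn : η n = 1 - ∑ k ∈ Finset.Icc 1 (n - 1), η k) :
    ∀ j ∈ Finset.Icc 1 n, 0 ≤ η j :=
  generalized_coefficients_nonneg_general n hn W Wub Wlb hi hii hden η hη1 hηj hηn
end

section
/- Fix a nonnegative nondecreasing concave W : ℕ → ℝ with W(0)=0, and ρ ≥ 1. Define F(1) = W(1) and recursively F(j+1) = max over ℓ ∈ {1,...,n} of [min(j, n-ℓ)·F(j) - W(j)·ρ + W(ℓ)] / min(ℓ, n-j) for j = 1,...,n-1. If ĵ is the smallest index with F(ĵ+1) > F(ĵ), then F(j+1) > F(j) for all j = ĵ, ..., n-1 (i.e., once F starts increasing, it keeps increasing). -/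
/-!
Write `D j ℓ = W ℓ - ρ W j - (ℓ - j) F j`; the `ℓ`-th term of the recursion at `j` equals
`F j + D j ℓ / min ℓ (n - j)`, so it beats `F j` exactly when `D j ℓ > 0`.

By concavity and `ρ ≥ 1`, `D j ℓ ≤ 0` for every `ℓ > j`, by induction on `j`. Hence, if
`F j < F (j + 1)`, the maximising `ℓ` satisfies `ℓ ≤ j`, and concavity turns `D j ℓ > 0` into
`ρ (W (j + 1) - W j) < F j`. The same maximiser `ℓ` then has `D (j + 1) ℓ > 0`, so
`F (j + 1) < F (j + 2)`.
-/

open Finset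

section Concave

variable {W : ℕ → ℝ}

theorem antitone_increment_of_concave
    (hconc : ∀ x : ℕ, 1 ≤ x → W (x + 1) - W x ≤ W x - W (x - 1)) :
    Antitone fun k => W (k + 1) - W k :=
  antitone_nat_of_succ_le fun k => by simpa using hconc (k + 1) (by omega)

theorem le_add_mul_increment (hΔ : Antitone fun k => W (k + 1) - W k) (j ℓ : ℕ) :
    W ℓ ≤ W j + ((ℓ : ℝ) - j) * (W (j + 1) - W j) := by
  rcases le_total j ℓ with hjℓ | hℓj
  · induction ℓ, hjℓ using Nat.le_induction with
    | base => simp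
    | succ ℓ hjℓ ih =>
      have := hΔ hjℓ
      push_cast
      linarith
  · induction j, hℓj using Nat.le_induction with
    | base => simp
    | succ j hℓj ih =>
      have hneg : (ℓ : ℝ) - (j + 1 : ℕ) ≤ 0 := by
        rw [sub_nonpos]; exact_mod_cast hℓj.trans j.le_succ
      have := mul_le_mul_of_nonpos_left (hΔ j.le_succ) hneg
      push_cast at this ⊢
      linarith

theorem le_mul_add_mul_increment (hΔ : Antitone fun k => W (k + 1) - W k)
    (hnonneg : ∀ x : ℕ, 0 ≤ W x) {ρ : ℝ} (hρ : 1 ≤ ρ) (j ℓ : ℕ) :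
    W ℓ ≤ ρ * (W j + ((ℓ : ℝ) - j) * (W (j + 1) - W j)) := by
  have h := le_add_mul_increment hΔ j ℓ
  nlinarith [hnonneg ℓ]

end Concave

section Recursion

variable {n : ℕ} {W F : ℕ → ℝ} {ρ : ℝ}

noncomputable def candidate (n : ℕ) (W F : ℕ → ℝ) (ρ : ℝ) (j ℓ : ℕ) : ℝ :=
  ((min j (n - ℓ) : ℕ) * F j - W j * ρ + W ℓ) / (min ℓ (n - j) : ℕ)

def excess (W F : ℕ → ℝ) (ρ : ℝ) (j ℓ : ℕ) : ℝ :=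
  W ℓ - ρ * W j - ((ℓ : ℝ) - j) * F j

theorem candidate_eq_add_excess_div {j ℓ : ℕ} (hℓ : ℓ ∈ Icc 1 n) (hjn : j < n) :
    candidate n W F ρ j ℓ = F j + excess W F ρ j ℓ / (min ℓ (n - j) : ℕ) := by
  obtain ⟨hℓ1, hℓn⟩ := mem_Icc.mp hℓ
  have hb : ((min ℓ (n - j) : ℕ) : ℝ) ≠ 0 := by exact_mod_cast (by omega : min ℓ (n - j) ≠ 0)
  have hab : ((min j (n - ℓ) : ℕ) : ℝ) + ℓ = (min ℓ (n - j) : ℕ) + j := by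
    exact_mod_cast (by omega : min j (n - ℓ) + ℓ = min ℓ (n - j) + j)
  rw [← eq_sub_iff_add_eq] at hab
  rw [candidate, excess, hab]
  field_simp
  ring

theorem lt_candidate_iff {j ℓ : ℕ} (hℓ : ℓ ∈ Icc 1 n) (hjn : j < n) :
    F j < candidate n W F ρ j ℓ ↔ 0 < excess W F ρ j ℓ := by
  have hb : (0 : ℝ) < (min ℓ (n - j) : ℕ) := by
    have := (mem_Icc.mp hℓ).1
    exact_mod_cast (by omega : 0 < min ℓ (n - j))
  rw [candidate_eq_add_excess_div hℓ hjn, lt_add_iff_pos_right, div_pos_iff_of_pos_right hb]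

variable (hFrec : ∀ j : ℕ, (hj1 : 1 ≤ j) → (hjn : j ≤ n - 1) →
      F (j + 1) = (Icc 1 n).sup' (nonempty_Icc.mpr (by omega)) (candidate n W F ρ j))
include hFrec

theorem candidate_le {j ℓ : ℕ} (hj1 : 1 ≤ j) (hjn : j ≤ n - 1) (hℓ : ℓ ∈ Icc 1 n) :
    candidate n W F ρ j ℓ ≤ F (j + 1) :=
  hFrec j hj1 hjn ▸ le_sup' _ hℓ

theorem exists_candidate_eq {j : ℕ} (hj1 : 1 ≤ j) (hjn : j ≤ n - 1) :
    ∃ ℓ ∈ Icc 1 n, F (j + 1) = candidate n W F ρ j ℓ :=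
  hFrec j hj1 hjn ▸ exists_mem_eq_sup' _ _

theorem excess_nonpos_of_lt (hΔ : Antitone fun k => W (k + 1) - W k)
    (h0 : W 0 = 0) (hnonneg : ∀ x : ℕ, 0 ≤ W x) (hρ : 1 ≤ ρ) (hF1 : F 1 = W 1)
    {j : ℕ} (hj1 : 1 ≤ j) : ∀ ℓ, j < ℓ → ℓ ≤ n → excess W F ρ j ℓ ≤ 0 := by
  induction j, hj1 using Nat.le_induction with
  | base =>
    intro ℓ _ _
    have := le_add_mul_increment hΔ 0 ℓ
    simp only [excess, hF1, h0, zero_add, Nat.cast_zero, sub_zero, Nat.cast_one] at this ⊢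
    nlinarith [hnonneg 1]
  | succ j hj1 ih =>
    intro ℓ hjℓ hℓn
    have hℓ : ℓ ∈ Icc 1 n := mem_Icc.mpr ⟨by omega, hℓn⟩
    have hD := ih ℓ (by omega) hℓn
    have hstep := candidate_le hFrec hj1 (by omega) hℓ
    rw [candidate_eq_add_excess_div hℓ (by omega), ← le_sub_iff_add_le'] at hstep
    have hgap : (0 : ℝ) < (ℓ : ℝ) - j := by
      rw [sub_pos]; exact_mod_cast (by omega : j < ℓ)
    have hb : (ℓ : ℝ) - j ≤ (min ℓ (n - j) : ℕ) := by
      rw [sub_le_iff_le_add]; norm_cast; omega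
    -- i.e. `W ℓ - ρ W j ≤ (ℓ - j) F (j + 1)`
    have hslope : excess W F ρ j ℓ ≤ ((ℓ : ℝ) - j) * (F (j + 1) - F j) := by
      have := div_le_div_of_nonneg_left (neg_nonneg.mpr hD) hgap hb
      rw [neg_div, neg_div, neg_le_neg_iff] at this
      rw [← div_le_iff₀' hgap]
      exact this.trans hstep
    have hW := le_mul_add_mul_increment hΔ hnonneg hρ j ℓ
    have hgap1 : (0 : ℝ) ≤ (ℓ : ℝ) - j - 1 := by
      rw [sub_sub, sub_nonneg]; exact_mod_cast (by omega : j + 1 ≤ ℓ)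
    have hprod : ((ℓ : ℝ) - j) * excess W F ρ (j + 1) ℓ ≤ 0 := by
      have := mul_le_mul_of_nonneg_left hslope hgap1
      unfold excess at this ⊢
      push_cast
      nlinarith
    exact nonpos_of_mul_nonpos_right hprod hgap

theorem rho_mul_increment_lt_of_lt (hΔ : Antitone fun k => W (k + 1) - W k)
    (h0 : W 0 = 0) (hnonneg : ∀ x : ℕ, 0 ≤ W x) (hρ : 1 ≤ ρ) (hF1 : F 1 = W 1)
    {j : ℕ} (hj1 : 1 ≤ j) (hjn : j ≤ n - 1) (hinc : F j < F (j + 1)) :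
    ρ * (W (j + 1) - W j) < F j := by
  obtain ⟨ℓ, hℓ, hmax⟩ := exists_candidate_eq hFrec hj1 hjn
  have hD : 0 < excess W F ρ j ℓ := (lt_candidate_iff hℓ (by omega)).mp (hmax ▸ hinc)
  have hℓj : ℓ ≤ j := by
    by_contra! hjℓ
    exact hD.not_ge (excess_nonpos_of_lt hFrec hΔ h0 hnonneg hρ hF1 hj1 ℓ hjℓ (mem_Icc.mp hℓ).2)
  have hW := le_mul_add_mul_increment hΔ hnonneg hρ j ℓ
  have hprod : 0 < ((j : ℝ) - ℓ) * (F j - ρ * (W (j + 1) - W j)) := by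
    unfold excess at hD
    linarith
  have hgap : (0 : ℝ) ≤ (j : ℝ) - ℓ := sub_nonneg.mpr (by exact_mod_cast hℓj)
  exact sub_pos.mp (pos_of_mul_pos_right hprod hgap)

theorem succ_lt_of_lt_of_rho_mul_increment_lt {j : ℕ} (hj1 : 1 ≤ j) (hjn : j + 1 ≤ n - 1)
    (hinc : F j < F (j + 1)) (hsmall : ρ * (W (j + 1) - W j) < F (j + 1)) :
    F (j + 1) < F (j + 1 + 1) := by
  obtain ⟨ℓ, hℓ, hmax⟩ := exists_candidate_eq hFrec hj1 (by omega)
  obtain ⟨hℓ1, hℓn⟩ := mem_Icc.mp hℓ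
  rw [candidate_eq_add_excess_div hℓ (by omega)] at hmax
  have hb : (0 : ℝ) < (min ℓ (n - j) : ℕ) := by
    exact_mod_cast (by omega : 0 < min ℓ (n - j))
  have hD : excess W F ρ j ℓ = (min ℓ (n - j) : ℕ) * (F (j + 1) - F j) := by
    rw [hmax]
    field_simp
    ring
  -- this weight is `min j (n - ℓ)`
  have hweight : (0 : ℝ) ≤ (min ℓ (n - j) : ℕ) - ((ℓ : ℝ) - j) := by
    rw [sub_nonneg, sub_le_iff_le_add]
    exact_mod_cast (by omega : ℓ ≤ min ℓ (n - j) + j)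
  have hnext : 0 < excess W F ρ (j + 1) ℓ := by
    have hsplit : excess W F ρ (j + 1) ℓ = ((min ℓ (n - j) : ℕ) - ((ℓ : ℝ) - j)) *
        (F (j + 1) - F j) + (F (j + 1) - ρ * (W (j + 1) - W j)) := by
      unfold excess at hD ⊢
      push_cast at hD ⊢
      linear_combination hD
    rw [hsplit]
    exact add_pos_of_nonneg_of_pos (mul_nonneg hweight (sub_nonneg.mpr hinc.le))
      (sub_pos.mpr hsmall)
  exact ((lt_candidate_iff hℓ (by omega)).mpr hnext).trans_le
    (candidate_le hFrec (by omega) hjn hℓ)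

end Recursion

theorem f_continues_increasing
    (n : ℕ) (hn : 2 ≤ n)
    (W : ℕ → ℝ)
    (h0 : W 0 = 0)
    (hnonneg : ∀ x : ℕ, 0 ≤ W x)
    (hconc : ∀ x : ℕ, 1 ≤ x → W (x + 1) - W x ≤ W x - W (x - 1))
    (ρ : ℝ) (hρ : 1 ≤ ρ)
    (F : ℕ → ℝ)
    (hF1 : F 1 = W 1)
    (hFrec : ∀ j : ℕ, 1 ≤ j → j ≤ n - 1 →
      F (j + 1) = (Finset.Icc 1 n).sup'
        (Finset.nonempty_Icc.mpr (by omega))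
        (fun ℓ => ((min j (n - ℓ) : ℕ) * F j - W j * ρ + W ℓ) / (min ℓ (n - j) : ℕ)))
    (jhat : ℕ) (hjhat1 : 1 ≤ jhat)
    (hinc : F jhat < F (jhat + 1)) :
    ∀ j : ℕ, jhat ≤ j → j ≤ n - 1 → F j < F (j + 1) := by
  have hΔ := antitone_increment_of_concave hconc
  intro j hj
  induction j, hj using Nat.le_induction with
  | base => exact fun _ => hinc
  | succ j hj ih =>
    intro hjn
    have hlt := ih (by omega)
    have hsmall := rho_mul_increment_lt_of_lt hFrec hΔ h0 hnonneg hρ hF1 (by omega) (by omega) hlt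
    exact succ_lt_of_lt_of_rho_mul_increment_lt hFrec (by omega) hjn hlt (hsmall.trans hlt)
end

section
/- For F : ℕ → ℝ with 1-α ≤ F(x+1) ≤ F(x) ≤ 1 and V(x) = (1-α)x + α·min(x,β) with α ∈ [0,1], 1 ≤ β ≤ n, and any ρ such that ρ·V(x) ≥ V(β) + min(x, n-β)·F(x) - min(β, n-x)·F(x+1), it holds that ρ·V(x) ≥ V(y) + min(x, n-y)·F(x) - min(y, n-x)·F(x+1) for all y ∈ {1, ..., n} (i.e., y = β gives the binding constraint). -/
set_option maxHeartbeats 1000000 in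
lemma key_real (α X N B Y Fx Fx' : ℝ)
    (hα0 : 0 ≤ α) (hα1 : α ≤ 1)
    (hF1 : 1 - α ≤ Fx') (hF2 : Fx' ≤ Fx) (hF3 : Fx ≤ 1)
    (hBN : B ≤ N) (hYN : Y ≤ N) (hXN : X ≤ N) :
    (1 - α) * Y + α * min Y B + min X (N - Y) * Fx - min Y (N - X) * Fx' ≤
      (1 - α) * B + α * min B B + min X (N - B) * Fx - min B (N - X) * Fx' := by
  rw [min_self]
  rcases le_total Y B with hYB | hYB
  · rw [min_eq_left hYB]
    rcases min_cases X (N - Y) with ⟨e1, h1⟩ | ⟨e1, h1⟩ <;>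
    rcases min_cases Y (N - X) with ⟨e2, h2⟩ | ⟨e2, h2⟩ <;>
    rcases min_cases X (N - B) with ⟨e3, h3⟩ | ⟨e3, h3⟩ <;>
    rcases min_cases B (N - X) with ⟨e4, h4⟩ | ⟨e4, h4⟩ <;>
    rw [e1, e2, e3, e4] <;> nlinarith
  · rw [min_eq_right hYB]
    rcases min_cases X (N - Y) with ⟨e1, h1⟩ | ⟨e1, h1⟩ <;>
    rcases min_cases Y (N - X) with ⟨e2, h2⟩ | ⟨e2, h2⟩ <;>
    rcases min_cases X (N - B) with ⟨e3, h3⟩ | ⟨e3, h3⟩ <;>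
    rcases min_cases B (N - X) with ⟨e4, h4⟩ | ⟨e4, h4⟩ <;>
    rw [e1, e2, e3, e4] <;> nlinarith

theorem binding_constraint_at_beta
    (α : ℝ) (hα0 : 0 ≤ α) (hα1 : α ≤ 1)
    (β n x : ℕ) (hβ1 : 1 ≤ β) (hβn : β ≤ n) (hx1 : 1 ≤ x) (hxn : x ≤ n - 1)
    (V : ℕ → ℝ) (hV : ∀ y : ℕ, V y = (1 - α) * y + α * min y β)
    (F : ℕ → ℝ)
    (hF1 : 1 - α ≤ F (x + 1)) (hF2 : F (x + 1) ≤ F x) (hF3 : F x ≤ 1)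
    (ρ : ℝ)
    (hρ : ρ * V x ≥ V β + (min x (n - β) : ℕ) * F x - (min β (n - x) : ℕ) * F (x + 1)) :
    ∀ y : ℕ, 1 ≤ y → y ≤ n →
      ρ * V x ≥ V y + (min x (n - y) : ℕ) * F x - (min y (n - x) : ℕ) * F (x + 1) := by
  intro y hy1 hyn
  have hxn' : x ≤ n := le_trans hxn (Nat.sub_le n 1)
  have key : V y + (min x (n - y) : ℕ) * F x - (min y (n - x) : ℕ) * F (x + 1) ≤
      V β + (min x (n - β) : ℕ) * F x - (min β (n - x) : ℕ) * F (x + 1) := by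
    rw [hV y, hV β]
    push_cast [Nat.cast_sub hyn, Nat.cast_sub hβn, Nat.cast_sub hxn']
    have := key_real α x n β y (F x) (F (x + 1)) hα0 hα1 hF1 hF2 hF3
      (by exact_mod_cast hβn) (by exact_mod_cast hyn) (by exact_mod_cast hxn')
    rw [min_self] at this ⊢
    linarith [this]
  linarith
end
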